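/- For the path P_n on n ≥ 1 vertices, γ_I(P_n ⊙ K_1) = ⌈4n/3⌉. -/

import Mathlib

open SimpleGraph Finset
open scoped Classical

/-- An Italian dominating function: values in {0,1,2}, and every vertex with
value 0 has neighbor values summing to at least 2. -/
def IsItalian {V : Type*} [Fintype V] (G : SimpleGraph V) (f : V → ℕ) : Prop :=
  (∀ v, f v ≤ 2) ∧
    ∀ v, f v = 0 → 2 ≤ ∑ u ∈ Finset.univ.filter (fun w => G.Adj v w), f u

/-- The Italian domination number: minimum weight of an Italian dominating function. -/
noncomputable def italianDomNumber {V : Type*} [Fintype V] (G : SimpleGraph V) : ℕ :=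
  sInf {w | ∃ f : V → ℕ, IsItalian G f ∧ ∑ v, f v = w}

/-- The corona `G ⊙ K₁`: attach one pendant vertex (an `inr` copy) to each vertex of `G`. -/
def coronaK1 {V : Type*} (G : SimpleGraph V) : SimpleGraph (V ⊕ V) :=
  SimpleGraph.fromRel (fun a b =>
    match a, b with
    | Sum.inl u, Sum.inl v => G.Adj u v
    | Sum.inl u, Sum.inr v => u = v
    | Sum.inr u, Sum.inl v => u = v
    | Sum.inr _, Sum.inr _ => False)

/-- The corona `G ⊙ H`: one copy of `H` per vertex of `G`, each joined to that vertex. -/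
def corona {V W : Type*} (G : SimpleGraph V) (H : SimpleGraph W) :
    SimpleGraph (V ⊕ V × W) :=
  SimpleGraph.fromRel (fun a b =>
    match a, b with
    | Sum.inl u, Sum.inl v => G.Adj u v
    | Sum.inl u, Sum.inr p => u = p.1
    | Sum.inr p, Sum.inl v => p.1 = v
    | Sum.inr p, Sum.inr q => p.1 = q.1 ∧ H.Adj p.2 q.2)

/-!
In the corona `G ⊙ K₁`, every vertex `v` of `G` together with its pendant vertex carries weight
at least `1`, and the vertices `v` whose pair carries weight at least `2` dominate `G`; conversely
a dominating set `S` yields the Italian function putting `2` on `S` and `1` on the pendants of the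
other vertices. Hence `γ_I(G ⊙ K₁) = |V| + γ(G)`, and `γ(Pₙ) = ⌈n/3⌉` because a vertex of a path
dominates at most three vertices while `{1, 4, 7, …}` (plus the last vertex if needed) dominates `Pₙ`.
-/

theorem italianDomNumber_le {V : Type*} [Fintype V] {G : SimpleGraph V} {f : V → ℕ}
    (hf : IsItalian G f) : italianDomNumber G ≤ ∑ v, f v :=
  Nat.sInf_le ⟨f, hf, rfl⟩

theorem le_italianDomNumber {V : Type*} [Fintype V] {G : SimpleGraph V} {k : ℕ}
    (h : ∀ f, IsItalian G f → k ≤ ∑ v, f v) : k ≤ italianDomNumber G := by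
  obtain ⟨f, hf, hsum⟩ : italianDomNumber G ∈ {w | ∃ f : V → ℕ, IsItalian G f ∧ ∑ v, f v = w} :=
    Nat.sInf_mem ⟨_, fun _ => 1, ⟨fun _ => one_le_two, fun _ h => absurd h one_ne_zero⟩, rfl⟩
  exact hsum ▸ h f hf

namespace SimpleGraph

variable {V : Type*}

def IsDominatingSet (G : SimpleGraph V) (S : Finset V) : Prop :=
  ∀ v, v ∈ S ∨ ∃ u ∈ S, G.Adj v u

noncomputable def dominationNumber [Fintype V] (G : SimpleGraph V) : ℕ :=
  sInf {k | ∃ S : Finset V, G.IsDominatingSet S ∧ #S = k}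

section Domination

variable [Fintype V] {G : SimpleGraph V} {S : Finset V}

theorem dominationNumber_le (hS : G.IsDominatingSet S) : G.dominationNumber ≤ #S :=
  Nat.sInf_le ⟨S, hS, rfl⟩

theorem exists_isDominatingSet_card_eq_dominationNumber :
    ∃ S, G.IsDominatingSet S ∧ #S = G.dominationNumber :=
  Nat.sInf_mem (s := {k | ∃ S : Finset V, G.IsDominatingSet S ∧ #S = k})
    ⟨_, univ, fun v => Or.inl (mem_univ v), rfl⟩

theorem IsDominatingSet.card_le_succ_mul_card {d : ℕ} (hS : G.IsDominatingSet S)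
    (hd : ∀ v, G.degree v ≤ d) : Fintype.card V ≤ (d + 1) * #S := by
  have hcover : univ ⊆ S.biUnion fun u => insert u (G.neighborFinset u) := by
    intro v _
    rcases hS v with hv | ⟨u, hu, huv⟩
    · exact mem_biUnion.2 ⟨v, hv, mem_insert_self v _⟩
    · exact mem_biUnion.2 ⟨u, hu, mem_insert_of_mem ((mem_neighborFinset G u v).2 huv.symm)⟩
  calc Fintype.card V ≤ #S * (d + 1) :=
        (card_le_card hcover).trans <| card_biUnion_le_card_mul _ _ _ fun u _ =>
          (card_insert_le _ _).trans (Nat.succ_le_succ (hd u))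
    _ = (d + 1) * #S := Nat.mul_comm _ _

end Domination

theorem pathGraph_degree_le_two {n : ℕ} (v : Fin n) : (pathGraph n).degree v ≤ 2 := by
  match n with
  | 0 => exact v.elim0
  | 1 => simp [degree]
  | n + 2 =>
    calc (pathGraph (n + 2)).degree v ≤ (cycleGraph (n + 2)).degree v :=
          degree_le_of_le pathGraph_le_cycleGraph
      _ ≤ 2 := cycleGraph_degree_two_le ▸ card_le_two

theorem exists_isDominatingSet_pathGraph (n : ℕ) :
    ∃ S : Finset (Fin n), (pathGraph n).IsDominatingSet S ∧ #S ≤ (n + 2) / 3 := by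
  match n with
  | 0 => exact ⟨∅, fun v => v.elim0, by simp⟩
  | m + 1 =>
    let center : ℕ → Fin (m + 1) := fun k => ⟨min (3 * k + 1) m, by omega⟩
    refine ⟨(range ((m + 1 + 2) / 3)).image center, fun v => ?_,
      card_image_le.trans (card_range _).le⟩
    have hk : v.val / 3 ∈ range ((m + 1 + 2) / 3) := mem_range.2 (by omega)
    by_cases hv : center (v.val / 3) = v
    · exact Or.inl (mem_image.2 ⟨_, hk, hv⟩)
    · refine Or.inr ⟨_, mem_image_of_mem center hk, pathGraph_adj.2 ?_⟩
      simp only [center, Fin.ext_iff] at hv ⊢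
      omega

theorem dominationNumber_pathGraph (n : ℕ) : (pathGraph n).dominationNumber = (n + 2) / 3 := by
  obtain ⟨S, hS, hcard⟩ := exists_isDominatingSet_pathGraph n
  obtain ⟨T, hT, hTcard⟩ :=
    exists_isDominatingSet_card_eq_dominationNumber (G := pathGraph n)
  have hlower := hT.card_le_succ_mul_card pathGraph_degree_le_two
  have hupper := dominationNumber_le hS
  rw [Fintype.card_fin] at hlower
  omega

end SimpleGraph

section Corona

variable {V : Type*} (G : SimpleGraph V)

@[simp]
theorem coronaK1_adj_inl_inl {u v : V} :
    (coronaK1 G).Adj (Sum.inl u) (Sum.inl v) ↔ G.Adj u v := by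
  simp only [coronaK1, fromRel_adj, ne_eq, Sum.inl.injEq]
  exact ⟨fun ⟨_, h⟩ => h.elim id G.adj_symm, fun h => ⟨h.ne, Or.inl h⟩⟩

@[simp]
theorem coronaK1_adj_inl_inr {u v : V} :
    (coronaK1 G).Adj (Sum.inl u) (Sum.inr v) ↔ u = v := by
  simp only [coronaK1, fromRel_adj]
  exact ⟨fun ⟨_, h⟩ => h.elim id Eq.symm, fun h => ⟨Sum.inl_ne_inr, Or.inl h⟩⟩

@[simp]
theorem coronaK1_adj_inr_inl {u v : V} :
    (coronaK1 G).Adj (Sum.inr u) (Sum.inl v) ↔ u = v := by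
  rw [adj_comm, coronaK1_adj_inl_inr, eq_comm]

@[simp]
theorem coronaK1_not_adj_inr_inr {u v : V} : ¬(coronaK1 G).Adj (Sum.inr u) (Sum.inr v) := by
  simp [coronaK1]

variable [Fintype V]

theorem sum_coronaK1_adj_inr (f : V ⊕ V → ℕ) (i : V) :
    ∑ u ∈ univ.filter (fun w => (coronaK1 G).Adj (Sum.inr i) w), f u = f (Sum.inl i) := by
  rw [sum_filter, Fintype.sum_sum_type]
  simp

theorem sum_coronaK1_adj_inl (f : V ⊕ V → ℕ) (i : V) :
    ∑ u ∈ univ.filter (fun w => (coronaK1 G).Adj (Sum.inl i) w), f u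
      = f (Sum.inr i) + ∑ j ∈ univ.filter (fun j => G.Adj i j), f (Sum.inl j) := by
  rw [sum_filter, Fintype.sum_sum_type, sum_filter, add_comm]
  simp

theorem sum_coronaK1 (f : V ⊕ V → ℕ) : ∑ v, f v = ∑ i, (f (Sum.inl i) + f (Sum.inr i)) := by
  rw [Fintype.sum_sum_type, sum_add_distrib]

namespace IsItalian

variable {G} {f : V ⊕ V → ℕ} (hf : IsItalian (coronaK1 G) f)
include hf

theorem coronaK1_one_le (i : V) : 1 ≤ f (Sum.inl i) + f (Sum.inr i) := by
  by_contra! h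
  have := hf.2 (Sum.inr i) (by omega)
  rw [sum_coronaK1_adj_inr] at this
  omega

theorem coronaK1_two_le_of_ne_zero {i : V} (hi : f (Sum.inl i) ≠ 0) :
    2 ≤ f (Sum.inl i) + f (Sum.inr i) := by
  by_cases h : f (Sum.inr i) = 0
  · have := hf.2 (Sum.inr i) h
    rw [sum_coronaK1_adj_inr] at this
    omega
  · omega

/-- A pair of weight `1` must have `f (inl i) = 0` and `f (inr i) = 1`, so the Italian condition
at `inl i` forces a neighbour `inl j` with positive weight, whose pair then has weight `≥ 2`. -/
theorem isDominatingSet_coronaK1 :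
    G.IsDominatingSet (univ.filter fun i => 2 ≤ f (Sum.inl i) + f (Sum.inr i)) := by
  intro i
  by_cases hi : 2 ≤ f (Sum.inl i) + f (Sum.inr i)
  · exact Or.inl (mem_filter.2 ⟨mem_univ i, hi⟩)
  have hinl : f (Sum.inl i) = 0 := by
    by_contra h
    exact hi (hf.coronaK1_two_le_of_ne_zero h)
  have hinr : f (Sum.inr i) = 1 := by have := hf.coronaK1_one_le i; omega
  have hsum := hf.2 (Sum.inl i) hinl
  rw [sum_coronaK1_adj_inl, hinr] at hsum
  obtain ⟨j, hj, hj0⟩ :=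
    exists_ne_zero_of_sum_ne_zero (by omega : ∑ j ∈ univ.filter (G.Adj i ·), f (Sum.inl j) ≠ 0)
  exact Or.inr ⟨j, mem_filter.2 ⟨mem_univ j, hf.coronaK1_two_le_of_ne_zero hj0⟩,
    (mem_filter.1 hj).2⟩

theorem card_add_card_le_sum_coronaK1 :
    Fintype.card V + #(univ.filter fun i => 2 ≤ f (Sum.inl i) + f (Sum.inr i)) ≤ ∑ v, f v := by
  rw [card_filter, sum_coronaK1, ← card_univ, card_eq_sum_ones, ← sum_add_distrib]
  refine sum_le_sum fun i _ => ?_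
  have := hf.coronaK1_one_le i
  split_ifs <;> omega

end IsItalian

noncomputable def italianOfDominatingSet (S : Finset V) : V ⊕ V → ℕ :=
  Sum.elim (fun i => if i ∈ S then 2 else 0) (fun i => if i ∈ S then 0 else 1)

variable {G}

theorem isItalian_italianOfDominatingSet {S : Finset V} (hS : G.IsDominatingSet S) :
    IsItalian (coronaK1 G) (italianOfDominatingSet S) := by
  constructor
  · rintro (i | i) <;> simp only [italianOfDominatingSet, Sum.elim_inl, Sum.elim_inr] <;>
      split_ifs <;> omega
  rintro (i | i) hi
  · rw [sum_coronaK1_adj_inl]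
    have hiS : i ∉ S := by simpa [italianOfDominatingSet] using hi
    obtain ⟨j, hjS, hij⟩ := (hS i).resolve_left hiS
    have hj : j ∈ univ.filter (fun j => G.Adj i j) := mem_filter.2 ⟨mem_univ j, hij⟩
    have hj2 : italianOfDominatingSet S (Sum.inl j) = 2 := by simp [italianOfDominatingSet, hjS]
    have := single_le_sum (f := fun j => italianOfDominatingSet S (Sum.inl j))
      (fun _ _ => Nat.zero_le _) hj
    beta_reduce at this
    omega
  · rw [sum_coronaK1_adj_inr]
    simp only [italianOfDominatingSet, Sum.elim_inl, Sum.elim_inr] at hi ⊢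
    split_ifs at hi ⊢; omega

theorem sum_italianOfDominatingSet (S : Finset V) :
    ∑ v, italianOfDominatingSet S v = Fintype.card V + #S := by
  calc ∑ v, italianOfDominatingSet S v = ∑ i, (1 + if i ∈ S then 1 else 0) := by
        rw [sum_coronaK1]
        refine sum_congr rfl fun i _ => ?_
        simp only [italianOfDominatingSet, Sum.elim_inl, Sum.elim_inr]
        split_ifs <;> rfl
    _ = Fintype.card V + #S := by
        rw [sum_add_distrib, sum_const, card_univ, smul_eq_mul, mul_one, ← card_filter,
          filter_mem_eq_inter, univ_inter]

end Corona

theorem italianDomNumber_coronaK1 {V : Type*} [Fintype V] (G : SimpleGraph V) :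
    italianDomNumber (coronaK1 G) = Fintype.card V + G.dominationNumber := by
  apply le_antisymm
  · obtain ⟨S, hS, hcard⟩ := exists_isDominatingSet_card_eq_dominationNumber (G := G)
    calc italianDomNumber (coronaK1 G) ≤ ∑ v, italianOfDominatingSet S v :=
          italianDomNumber_le (isItalian_italianOfDominatingSet hS)
      _ = Fintype.card V + G.dominationNumber := by rw [sum_italianOfDominatingSet, hcard]
  · refine le_italianDomNumber fun f hf => ?_
    exact (Nat.add_le_add_left (dominationNumber_le hf.isDominatingSet_coronaK1) _).trans
      hf.card_add_card_le_sum_coronaK1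

theorem italian_coronaK1_path_general (n : ℕ) :
    italianDomNumber (coronaK1 (SimpleGraph.pathGraph n)) = (4 * n + 2) / 3 := by
  rw [italianDomNumber_coronaK1, dominationNumber_pathGraph, Fintype.card_fin]
  omega

theorem italian_coronaK1_path (n : ℕ) (hn : 1 ≤ n) :
    italianDomNumber (coronaK1 (SimpleGraph.pathGraph n)) = (4 * n + 2) / 3 :=
  italian_coronaK1_path_general n
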